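/- Let α > 1 and z ≤ 0. Then it is NOT the case that for all θ ∈ (0, π/2): (cos(θ − π/4))^{2z} ≥ 2^{−α}((cos θ)^{2−2α} + (sin θ)^{2−2α}). In other words, there exists θ ∈ (0, π/2) violating this inequality. -/

import Mathlib

/-! As `θ → 0⁺` the right-hand side blows up, since `sin θ ^ (2 - 2α) → ∞` for `α > 1`, while the
left-hand side stays below `cos (π / 4) ^ (2z) = 2 ^ (-z)`: on `[0, π/2]` the angle `θ - π/4` lies
in `[-π/4, π/4]`, and a nonpositive power reverses the bound `cos (π / 4) ≤ cos (θ - π / 4)`. -/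

open Real Filter Topology

lemma cos_pi_div_four_le_cos_sub_pi_div_four {θ : ℝ} (h₀ : 0 ≤ θ) (h₁ : θ ≤ π / 2) :
    cos (π / 4) ≤ cos (θ - π / 4) := by
  rw [← cos_abs (θ - π / 4)]
  exact cos_le_cos_of_nonneg_of_le_pi (abs_nonneg _) (by linarith [pi_pos])
    (abs_le.2 ⟨by linarith, by linarith⟩)

lemma cos_pi_div_four_rpow_two_mul (z : ℝ) : cos (π / 4) ^ (2 * z) = 2 ^ (-z) := by
  have hcos : 0 ≤ cos (π / 4) := cos_nonneg_of_mem_Icc ⟨by linarith [pi_pos], by linarith [pi_pos]⟩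
  rw [rpow_mul hcos, rpow_two, cos_pi_div_four, div_pow, sq_sqrt zero_le_two]
  norm_num [rpow_neg, div_rpow]

lemma cos_sub_pi_div_four_rpow_le {θ z : ℝ} (h₀ : 0 ≤ θ) (h₁ : θ ≤ π / 2) (hz : z ≤ 0) :
    cos (θ - π / 4) ^ (2 * z) ≤ 2 ^ (-z) := by
  rw [← cos_pi_div_four_rpow_two_mul]
  exact rpow_le_rpow_of_nonpos (cos_pos_of_mem_Ioo ⟨by linarith [pi_pos], by linarith [pi_pos]⟩)
    (cos_pi_div_four_le_cos_sub_pi_div_four h₀ h₁) (by linarith)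

lemma tendsto_sin_nhdsGT_zero : Tendsto sin (𝓝[>] 0) (𝓝[>] 0) := by
  refine tendsto_nhdsWithin_of_tendsto_nhds_of_eventually_within _
    (continuous_sin.tendsto' 0 0 sin_zero |>.mono_left nhdsWithin_le_nhds) ?_
  filter_upwards [Ioo_mem_nhdsGT pi_pos] with θ hθ
  exact sin_pos_of_pos_of_lt_pi hθ.1 hθ.2

lemma tendsto_sin_rpow_nhdsGT_zero {p : ℝ} (hp : p < 0) :
    Tendsto (fun θ => sin θ ^ p) (𝓝[>] 0) atTop :=
  (tendsto_rpow_neg_nhdsGT_zero hp).comp tendsto_sin_nhdsGT_zero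

lemma tendsto_cos_rpow_add_sin_rpow_nhdsGT_zero {p : ℝ} (hp : p < 0) :
    Tendsto (fun θ => cos θ ^ p + sin θ ^ p) (𝓝[>] 0) atTop := by
  refine tendsto_atTop_mono' _ ?_ (tendsto_sin_rpow_nhdsGT_zero hp)
  -- `cos θ ^ p` is only eventually nonnegative: `rpow` of a negative base can be negative.
  filter_upwards [Ioo_mem_nhdsGT pi_div_two_pos] with θ hθ
  have hcos : 0 ≤ cos θ := cos_nonneg_of_mem_Icc ⟨by linarith [hθ.1, pi_pos], hθ.2.le⟩
  exact le_add_of_nonneg_left (rpow_nonneg hcos p)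

/-- For `α > 1` and `z ≤ 0` the reversed monotonicity inequality fails for some angle,
ruling out nondegenerate monotone homomorphisms into `ℝ₊` with classical parameter `α > 1`. -/
theorem no_homomorphism_alpha_gt_one
    (α z : ℝ) (hα : 1 < α) (hz : z ≤ 0) :
    ∃ θ ∈ Set.Ioo (0 : ℝ) (π / 2),
      (Real.cos (θ - π / 4)) ^ (2 * z) <
        (2 : ℝ) ^ (-α) * ((Real.cos θ) ^ (2 - 2 * α) + (Real.sin θ) ^ (2 - 2 * α)) := by
  have hRHS : Tendsto (fun θ => (2 : ℝ) ^ (-α) * (cos θ ^ (2 - 2 * α) + sin θ ^ (2 - 2 * α)))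
      (𝓝[>] 0) atTop :=
    (tendsto_cos_rpow_add_sin_rpow_nhdsGT_zero (by linarith)).const_mul_atTop (by positivity)
  obtain ⟨θ, hθ, hlarge⟩ :=
    (Eventually.and (Ioo_mem_nhdsGT pi_div_two_pos)
      (hRHS.eventually_gt_atTop ((2 : ℝ) ^ (-z)))).exists
  exact ⟨θ, hθ, (cos_sub_pi_div_four_rpow_le hθ.1.le hθ.2.le hz).trans_lt hlarge⟩
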